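/- Let r ≥ 1 and 0 ≤ a ≤ r be integers, and let S ⊆ ℂ^{r−a} be a subset whose ℂ-linear span is all of ℂ^{r−a}. Then the set of polynomials P ∈ ℂ[w_1, …, w_{r+1}] satisfying σ_b(P) = P for every b ∈ S is exactly the ℂ-subalgebra ℂ[w_{r−a+1}, …, w_{r+1}] generated by the last a+1 variables (i.e. the subalgebra of polynomials supported on the variables w_{r−a+1}, …, w_{r+1}). -/

import Mathlib

open MvPolynomial

/-- The "shear" substitution `σ_b` on `ℂ[w_1, …, w_{r+1}]` determined by
`w_i ↦ w_i + b_i · w_{r+1}` for the first `r - a` variables and fixing the remaining ones. -/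
noncomputable def shear (r a : ℕ) (b : Fin (r - a) → ℂ) :
    MvPolynomial (Fin (r + 1)) ℂ →ₐ[ℂ] MvPolynomial (Fin (r + 1)) ℂ :=
  aeval fun i : Fin (r + 1) =>
    if h : (i : ℕ) < r - a then
      X i + C (b ⟨(i : ℕ), h⟩) * X (Fin.last r)
    else X i


noncomputable def shearPoly (r a : ℕ) (b : Fin (r - a) → ℂ) :
    MvPolynomial (Fin (r + 1)) ℂ →ₐ[ℂ] Polynomial (MvPolynomial (Fin (r + 1)) ℂ) :=
  aeval fun i : Fin (r + 1) =>
    if h : (i : ℕ) < r - a then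
      Polynomial.C (X i) + Polynomial.C (C (b ⟨(i : ℕ), h⟩) * X (Fin.last r)) * Polynomial.X
    else Polynomial.C (X i)

section helpers
variable (r a : ℕ)

lemma shearPoly_X (b : Fin (r - a) → ℂ) (i : Fin (r + 1)) :
    shearPoly r a b (X i) = if h : (i : ℕ) < r - a then
      Polynomial.C (X i) + Polynomial.C (C (b ⟨(i : ℕ), h⟩) * X (Fin.last r)) * Polynomial.X
    else Polynomial.C (X i) := by
  simp [shearPoly]

lemma eval_shearPoly (b : Fin (r - a) → ℂ) (lam : ℂ) (P : MvPolynomial (Fin (r + 1)) ℂ) :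
    Polynomial.eval (C lam) (shearPoly r a b P) = shear r a (lam • b) P := by
  have key : ((Polynomial.aeval (C lam : MvPolynomial (Fin (r+1)) ℂ)).restrictScalars ℂ).comp
      (shearPoly r a b) = shear r a (lam • b) := by
    apply MvPolynomial.algHom_ext
    intro i
    rw [AlgHom.comp_apply, shearPoly_X]
    rw [shear] ; simp only [aeval_X]
    by_cases h : (i : ℕ) < r - a
    · rw [dif_pos h, dif_pos h]
      simp only [AlgHom.coe_restrictScalars', map_add, map_mul, Polynomial.aeval_C,
        Polynomial.aeval_X, Pi.smul_apply, smul_eq_mul, map_mul, Algebra.algebraMap_self, RingHom.id_apply]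
      ring
    · rw [dif_neg h, dif_neg h]
      simp
  have := congrArg (fun f => f P) key
  beta_reduce at this
  rw [← this, AlgHom.comp_apply, AlgHom.coe_restrictScalars', Polynomial.coe_aeval_eq_eval]
end helpers

section span
variable (r a : ℕ)

lemma shear_zero' (P : MvPolynomial (Fin (r + 1)) ℂ) : shear r a 0 P = P := by
  have key : shear r a 0 = AlgHom.id ℂ _ := by
    apply MvPolynomial.algHom_ext
    intro i
    rw [shear]; simp only [aeval_X, AlgHom.coe_id, id_eq]
    by_cases h : (i : ℕ) < r - a
    · rw [dif_pos h]; simp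
    · rw [dif_neg h]
  rw [key]; rfl

lemma shear_comp' (b c : Fin (r - a) → ℂ) (P : MvPolynomial (Fin (r + 1)) ℂ) :
    shear r a b (shear r a c P) = shear r a (b + c) P := by
  have hX : ∀ (b : Fin (r-a) → ℂ) (i : Fin (r+1)), shear r a b (X i) =
      if h : (i : ℕ) < r - a then
        X i + C (b ⟨(i : ℕ), h⟩) * X (Fin.last r) else X i := by
    intro b i; simp [shear]
  have hlast : ∀ (b : Fin (r-a) → ℂ), shear r a b (X (Fin.last r)) = X (Fin.last r) := by
    intro b; rw [hX]
    have h : ¬ ((Fin.last r : Fin (r+1)) : ℕ) < r - a := by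
      simp only [Fin.val_last]; omega
    rw [dif_neg h]
  have hC : ∀ (b : Fin (r-a) → ℂ) (x : ℂ), shear r a b (C x) = C x := by
    intro b x; simp [shear]
  have key : (shear r a b).comp (shear r a c) = shear r a (b + c) := by
    apply MvPolynomial.algHom_ext
    intro i
    rw [AlgHom.comp_apply, hX, hX]
    by_cases h : (i : ℕ) < r - a
    · rw [dif_pos h, dif_pos h, map_add, map_mul, hX, dif_pos h, hlast, hC,
        Pi.add_apply, map_add]
      ring
    · rw [dif_neg h, dif_neg h, hX, dif_neg h]
  rw [← key]; rfl

lemma shearPoly_eq_C (b : Fin (r - a) → ℂ) (P : MvPolynomial (Fin (r + 1)) ℂ)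
    (h : ∀ n : ℕ, shear r a ((n : ℂ) • b) P = P) :
    shearPoly r a b P = Polynomial.C P := by
  have hQ : shearPoly r a b P - Polynomial.C P = 0 := by
    apply Polynomial.eq_zero_of_infinite_isRoot
    refine Set.infinite_of_injective_forall_mem
      (f := fun n : ℕ => (C (n : ℂ) : MvPolynomial (Fin (r+1)) ℂ)) ?_ ?_
    · intro m n hmn
      exact Nat.cast_injective (MvPolynomial.C_injective _ _ hmn)
    · intro n
      simp only [Set.mem_setOf_eq, Polynomial.IsRoot, Polynomial.eval_sub, Polynomial.eval_C,
        eval_shearPoly, h n, sub_self]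
  exact sub_eq_zero.mp hQ

lemma shear_nat_smul (b : Fin (r - a) → ℂ) (P : MvPolynomial (Fin (r + 1)) ℂ)
    (hb : shear r a b P = P) (n : ℕ) : shear r a ((n : ℂ) • b) P = P := by
  induction n with
  | zero => simpa using shear_zero' r a P
  | succ n ih =>
    have : ((n + 1 : ℕ) : ℂ) • b = b + (n : ℂ) • b := by
      push_cast; rw [add_smul, one_smul, add_comm]
    rw [this, ← shear_comp', ih, hb]

lemma shear_smul (b : Fin (r - a) → ℂ) (P : MvPolynomial (Fin (r + 1)) ℂ)
    (hb : shear r a b P = P) (lam : ℂ) : shear r a (lam • b) P = P := by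
  have := shearPoly_eq_C r a b P (shear_nat_smul r a b P hb)
  have h2 := eval_shearPoly r a b lam P
  rw [this, Polynomial.eval_C] at h2
  exact h2.symm

lemma shear_all (S : Set (Fin (r - a) → ℂ)) (hS : Submodule.span ℂ S = ⊤)
    (P : MvPolynomial (Fin (r + 1)) ℂ) (hP : ∀ b ∈ S, shear r a b P = P)
    (b : Fin (r - a) → ℂ) : shear r a b P = P := by
  have hb : b ∈ Submodule.span ℂ S := by rw [hS]; trivial
  refine Submodule.span_induction (p := fun b _ => shear r a b P = P)
    (fun x hx => hP x hx) (shear_zero' r a P)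
    (fun x y _ _ hx hy => by show shear r a (x + y) P = P; rw [← shear_comp', hy, hx])
    (fun c x _ hx => shear_smul r a x P hx c) hb

end span

section deriv
variable (r a : ℕ)

lemma shearPoly_coeff_zero (b : Fin (r - a) → ℂ) (P : MvPolynomial (Fin (r + 1)) ℂ) :
    (shearPoly r a b P).coeff 0 = P := by
  rw [Polynomial.coeff_zero_eq_eval_zero]
  have h := eval_shearPoly r a b 0 P
  rw [MvPolynomial.C_0, zero_smul, shear_zero'] at h
  exact h

lemma coeff_one_shearPoly (i0 : Fin (r + 1)) (h0 : (i0 : ℕ) < r - a)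
    (P : MvPolynomial (Fin (r + 1)) ℂ) :
    (shearPoly r a (Pi.single ⟨(i0 : ℕ), h0⟩ 1) P).coeff 1
      = X (Fin.last r) * pderiv i0 P := by
  set b : Fin (r - a) → ℂ := Pi.single ⟨(i0 : ℕ), h0⟩ 1 with hb
  induction P using MvPolynomial.induction_on with
  | C c =>
    have : shearPoly r a b (C c) = Polynomial.C (C c) := by
      simp [shearPoly, algebraMap_eq]
    rw [this]
    simp
  | add p q hp hq =>
    rw [map_add, Polynomial.coeff_add, hp, hq, map_add, mul_add]
  | mul_X p i hp =>
    have hc0 : (shearPoly r a b p).coeff 0 = p := shearPoly_coeff_zero r a b p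
    have hXc0 : (shearPoly r a b (X i)).coeff 0 = X i := shearPoly_coeff_zero r a b (X i)
    have hXc1 : (shearPoly r a b (X i)).coeff 1
        = if i = i0 then X (Fin.last r) else 0 := by
      rw [shearPoly_X]
      by_cases h : (i : ℕ) < r - a
      · rw [dif_pos h]
        simp only [Polynomial.coeff_add, Polynomial.coeff_C, Polynomial.coeff_C_mul,
          Polynomial.coeff_X_one]
        have hb' : b ⟨(i : ℕ), h⟩ = if i = i0 then 1 else 0 := by
          rw [hb]
          by_cases hii : i = i0
          · subst hii; simp
          · rw [if_neg hii, Pi.single_apply, if_neg]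
            intro hcon
            apply hii
            have hv := congrArg (fun x : Fin (r - a) => (x : ℕ)) hcon
            exact Fin.ext hv
        rw [hb']
        by_cases hii : i = i0 <;> simp [hii]
      · rw [dif_neg h]
        have hii : ¬ (i = i0) := fun hcon => h (hcon ▸ h0)
        simp [Polynomial.coeff_C, hii]
    have hmul : (shearPoly r a b (p * X i)).coeff 1
        = (shearPoly r a b p).coeff 0 * (shearPoly r a b (X i)).coeff 1
          + (shearPoly r a b p).coeff 1 * (shearPoly r a b (X i)).coeff 0 := by
      rw [map_mul, Polynomial.coeff_mul]
      have hanti : (Finset.HasAntidiagonal.antidiagonal 1 : Finset (ℕ × ℕ)) = {(0, 1), (1, 0)} := rfl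
      rw [hanti, Finset.sum_insert (by decide), Finset.sum_singleton]
    rw [hmul, hc0, hXc0, hXc1, hp]
    have hpd : pderiv i0 (X i : MvPolynomial (Fin (r+1)) ℂ)
        = if i = i0 then 1 else 0 := by
      by_cases hii : i = i0
      · subst hii; simp
      · simp [pderiv_X_of_ne hii, hii]
    rw [pderiv_mul, hpd]
    by_cases hii : i = i0 <;> simp [hii] <;> ring

lemma support_of_pderiv_eq_zero (i0 : Fin (r + 1)) (P : MvPolynomial (Fin (r + 1)) ℂ)
    (h : pderiv i0 P = 0) (m : Fin (r + 1) →₀ ℕ) (hm : m ∈ P.support) : m i0 = 0 := by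
  classical
  by_contra hne
  have hsum : pderiv i0 P
      = ∑ s ∈ P.support, monomial (s - Finsupp.single i0 1) (coeff s P * (s i0 : ℂ)) := by
    conv_lhs => rw [P.as_sum]
    rw [map_sum]
    refine Finset.sum_congr rfl fun s _ => ?_
    rw [pderiv_monomial]
  have hc : coeff (m - Finsupp.single i0 1) (pderiv i0 P) = coeff m P * (m i0 : ℂ) := by
    rw [hsum, coeff_sum]
    rw [Finset.sum_eq_single m]
    · rw [coeff_monomial, if_pos rfl]
    · intro s hs hsm
      rw [coeff_monomial]
      by_cases hsi : s i0 = 0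
      · simp [hsi]
      · rw [if_neg]
        intro hcon
        apply hsm
        ext k
        have hk := congrFun (congrArg (↑·) hcon) k
        simp only [Finsupp.coe_tsub, Pi.sub_apply] at hk
        by_cases hki : k = i0
        · subst hki
          simp only [Finsupp.single_eq_same] at hk
          omega
        · simpa [Finsupp.single_eq_of_ne' (Ne.symm hki)] using hk
    · intro hcon; exact absurd hm hcon
  rw [h] at hc
  simp only [coeff_zero] at hc
  have h1 : coeff m P ≠ 0 := mem_support_iff.mp hm
  have h2 : ((m i0 : ℕ) : ℂ) ≠ 0 := Nat.cast_ne_zero.mpr hne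
  exact (mul_ne_zero h1 h2) hc.symm

end deriv

/-- The polynomials in `ℂ[w_1, …, w_{r+1}]` invariant under the shear `σ_b` for every `b` in a
spanning subset `S ⊆ ℂ^{r-a}` are exactly those in the subalgebra
`ℂ[w_{r-a+1}, …, w_{r+1}]` generated by the last `a + 1` variables. -/
theorem invariant_polys_eq_supported_last_vars
    (r a : ℕ) (hr : 1 ≤ r) (har : a ≤ r)
    (S : Set (Fin (r - a) → ℂ))
    (hS : Submodule.span ℂ S = ⊤) :
    {P : MvPolynomial (Fin (r + 1)) ℂ | ∀ b ∈ S, shear r a b P = P}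
      = ↑(MvPolynomial.supported ℂ {i : Fin (r + 1) | r - a ≤ (i : ℕ)}) := by
  ext P
  simp only [Set.mem_setOf_eq, SetLike.mem_coe]
  constructor
  · intro hP
    rw [mem_supported]
    intro j hj
    simp only [Set.mem_setOf_eq]
    by_contra hge
    push_neg at hge
    have hall := shear_all r a S hS P hP
    have hb : shear r a (Pi.single ⟨(j : ℕ), hge⟩ 1) P = P := hall _
    have hpoly := shearPoly_eq_C r a _ P (shear_nat_smul r a _ P hb)
    have hco := coeff_one_shearPoly r a j hge P
    rw [hpoly] at hco
    have hzero : X (Fin.last r) * pderiv j P = 0 := by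
      rw [← hco, Polynomial.coeff_C]
      simp
    have hpd : pderiv j P = 0 := by
      rcases mul_eq_zero.mp hzero with h | h
      · exact absurd h (MvPolynomial.X_ne_zero _)
      · exact h
    obtain ⟨m, hm, hjm⟩ := (mem_vars j).mp (Finset.mem_coe.mp hj)
    exact (Finsupp.mem_support_iff.mp hjm) (support_of_pderiv_eq_zero r j P hpd m hm)
  · intro hP b _
    have hP' : P ∈ Algebra.adjoin ℂ
        (MvPolynomial.X '' {i : Fin (r + 1) | r - a ≤ (i : ℕ)}) := hP
    refine Algebra.adjoin_induction (p := fun x _ => shear r a b x = x)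
      ?_ ?_ ?_ ?_ hP'
    · rintro x ⟨i, hi, rfl⟩
      have h : ¬ ((i : ℕ) < r - a) := by
        simp only [Set.mem_setOf_eq] at hi; omega
      simp [shear, h]
    · intro x
      simp [shear, algebraMap_eq]
    · intro x y _ _ hx hy
      show shear r a b (x + y) = x + y
      rw [map_add, hx, hy]
    · intro x y _ _ hx hy
      show shear r a b (x * y) = x * y
      rw [map_mul, hx, hy]
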